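/- arXiv:2512.24581 — 2 statements merged into one kernel-verified Lean document; each statement's English description precedes it below -/
import Mathlib

section
/- Let n ≥ 5 and let V be a finite set of words over an n-letter alphabet, all of length L, such that for any two distinct u, v ∈ V the concatenation uv has local exponent at most n/(n-1). Then the maximum length of a common prefix of two distinct words of V is at most L/(n-1), and likewise for common suffixes. -/
/-!
If `p` is a common prefix of distinct `u, v ∈ V`, then `u ++ p` is a prefix of `u ++ v` of
period `|u| = L` and length `L + |p|`; its exponent is therefore at least `(L + |p|) / L`, and
`(L + |p|) / L ≤ n / (n - 1)` rearranges to `|p| ≤ L / (n - 1)`. Symmetrically, a common suffix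
`s` gives the suffix `s ++ v` of `u ++ v`, of period `|v| = L`.
-/

open List

/-- `p` is a period of the word `w`. -/
def HasPeriod {α : Type*} (w : List α) (p : ℕ) : Prop :=
  1 ≤ p ∧ ∀ i, i + p < w.length → w[i]? = w[i + p]?

/-- minimal period of a word -/
noncomputable def per {α : Type*} (w : List α) : ℕ := sInf {p | _root_.HasPeriod w p}

/-- local exponent of `w` is at most `q`: every nonempty factor has exponent ≤ q. -/
noncomputable def lexpLE {α : Type*} (w : List α) (q : ℚ) : Prop :=
  ∀ v : List α, v <:+: w → v ≠ [] → (v.length : ℚ) / per v ≤ q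

/-- `v` is a (finite) factor of the infinite word `ω`. -/
def FactorOfInf {α : Type*} (v : List α) (ω : ℕ → α) : Prop :=
  ∃ i : ℕ, v = List.ofFn (fun j : Fin v.length => ω (i + j))

theorem HasPeriod.per_le {α : Type*} {w : List α} {p : ℕ} (h : _root_.HasPeriod w p) :
    per w ≤ p :=
  Nat.sInf_le h

theorem HasPeriod.one_le_per {α : Type*} {w : List α} {p : ℕ} (h : _root_.HasPeriod w p) :
    1 ≤ per w :=
  (Nat.sInf_mem (⟨p, h⟩ : {p | _root_.HasPeriod w p}.Nonempty)).1

theorem hasPeriod_append_append_self {α : Type*} {x : List α} (y : List α) (hx : x ≠ []) :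
    _root_.HasPeriod (x ++ y ++ x) (x ++ y).length := by
  refine ⟨by simpa using Nat.le_add_right_of_le (length_pos_iff.mpr hx), ?_⟩
  intro i hi
  have hix : i < x.length := by simp at hi; omega
  rw [getElem?_append_left (by simp; omega), getElem?_append_left hix,
    getElem?_append_right (by omega), Nat.add_sub_cancel]

theorem lexpLE.length_le_mul_of_hasPeriod {α : Type*} {ω w : List α} {q : ℚ} {p : ℕ}
    (hω : lexpLE ω q) (hw : w <:+: ω) (hne : w ≠ []) (hp : _root_.HasPeriod w p) :
    (w.length : ℚ) ≤ q * p := by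
  have hper : (0 : ℚ) < per w := by exact_mod_cast hp.one_le_per
  have hexp := hω w hw hne
  have hq : 0 ≤ q := (div_nonneg (Nat.cast_nonneg _) hper.le).trans hexp
  calc (w.length : ℚ) ≤ q * per w := (div_le_iff₀ hper).mp hexp
    _ ≤ q * p := mul_le_mul_of_nonneg_left (by exact_mod_cast hp.per_le) hq

theorem le_div_sub_one_of_add_le_div_sub_one_mul {K : Type*} [Field K] [LinearOrder K]
    [IsStrictOrderedRing K] {a b c : K} (hc : c ≠ 1) (h : a + b ≤ c / (c - 1) * b) :
    a ≤ b / (c - 1) := by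
  have hc' : c - 1 ≠ 0 := sub_ne_zero.mpr hc
  have : c / (c - 1) * b = b + b / (c - 1) := by field_simp; ring
  linarith

theorem lexpLE.length_le_of_append_append_self_infix {α : Type*} {ω x y : List α} {c : ℚ}
    (hc : 1 < c) (hω : lexpLE ω (c / (c - 1))) (h : x ++ y ++ x <:+: ω) :
    (x.length : ℚ) ≤ (x ++ y).length / (c - 1) := by
  rcases eq_or_ne x [] with rfl | hx
  · simpa using div_nonneg (Nat.cast_nonneg _) (sub_nonneg.mpr hc.le)
  apply le_div_sub_one_of_add_le_div_sub_one_mul hc.ne'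
  have := hω.length_le_mul_of_hasPeriod h (by simp [hx]) (hasPeriod_append_append_self y hx)
  simpa [add_comm, add_left_comm] using this

theorem stmt1 (n L : ℕ) (hn : 5 ≤ n) (V : Finset (List (Fin n)))
    (hlen : ∀ v ∈ V, v.length = L)
    (hpair : ∀ u ∈ V, ∀ v ∈ V, u ≠ v → lexpLE (u ++ v) ((n : ℚ) / (n - 1))) :
    (∀ u ∈ V, ∀ v ∈ V, u ≠ v → ∀ p : List (Fin n), p <+: u → p <+: v →
        (p.length : ℚ) ≤ (L : ℚ) / (n - 1)) ∧
    (∀ u ∈ V, ∀ v ∈ V, u ≠ v → ∀ s : List (Fin n), s <:+ u → s <:+ v →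
        (s.length : ℚ) ≤ (L : ℚ) / (n - 1)) := by
  have hn1 : (1 : ℚ) < n := by exact_mod_cast (by omega : 1 < n)
  refine ⟨fun u hu v hv huv p hpu hpv => ?_, fun u hu v hv huv s hsu hsv => ?_⟩
  · obtain ⟨t, rfl⟩ := hpu
    have hw : p ++ t ++ p <:+: p ++ t ++ v := (prefix_append_right_inj _ |>.mpr hpv).isInfix
    simpa [hlen _ hu] using (hpair _ hu v hv huv).length_le_of_append_append_self_infix hn1 hw
  · obtain ⟨t, rfl⟩ := hsv
    have hw : s ++ t ++ s <:+: u ++ (t ++ s) := by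
      simpa using (suffix_append_self_iff.mpr hsu : s ++ (t ++ s) <:+ u ++ (t ++ s)).isInfix
    have hL : (s ++ t).length = L := by simpa [add_comm] using hlen _ hv
    simpa [hL] using (hpair u hu _ hv huv).length_le_of_append_append_self_infix hn1 hw
end

section
/- Let n ≥ 5, ε ≤ 1, and let w be a threshold word over n letters. If a factor xyx of w is not (|x|,ε)-exponential, then xyx is not extendable in w: no occurrence of xyx in w extends to an occurrence of a·xyx or xyx·b sharing the same period |xy| (i.e., with a extending the period on the left or b on the right). -/
open List

namespace HasPeriod

variable {α : Type*} {v : List α} {p : ℕ}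

theorem one_le_per_s11 (h : _root_.HasPeriod v p) : 1 ≤ per v :=
  (Nat.sInf_mem (⟨p, h⟩ : {q | _root_.HasPeriod v q}.Nonempty)).1

theorem per_le_s11 (h : _root_.HasPeriod v p) : per v ≤ p :=
  Nat.sInf_le h

end HasPeriod

theorem lexpLE.length_div_le_of_hasPeriod {α : Type*} {w v : List α} {q : ℚ} {p : ℕ}
    (hw : lexpLE w q) (hv : v <:+: w) (hne : v ≠ []) (hp : _root_.HasPeriod v p) :
    (v.length : ℚ) / p ≤ q :=
  calc (v.length : ℚ) / p ≤ v.length / per v := by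
        gcongr
        · exact_mod_cast hp.one_le_per_s11
        · exact_mod_cast hp.per_le_s11
    _ ≤ q := hw v hv hne

theorem stmt11_general (n : ℕ) (ε : ℚ) (hε : ε ≤ 1)
    (w : List (Fin n)) (hthr : lexpLE w ((n : ℚ) / (n - 1)))
    (x y : List (Fin n))
    (hbad : (n : ℚ) / (n - 1) < (((x ++ y ++ x).length : ℚ) + ε) / ((x ++ y).length : ℚ)) :
    (∀ a : Fin n, a :: (x ++ y ++ x) <:+: w →
      ¬ _root_.HasPeriod (a :: (x ++ y ++ x)) (x ++ y).length) ∧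
    (∀ b : Fin n, (x ++ y ++ x) ++ [b] <:+: w →
      ¬ _root_.HasPeriod ((x ++ y ++ x) ++ [b]) (x ++ y).length) := by
  have no_extension : ∀ v : List (Fin n), v <:+: w → v.length = (x ++ y ++ x).length + 1 →
      ¬ _root_.HasPeriod v (x ++ y).length := by
    intro v hv hlen hper
    have hne : v ≠ [] := List.ne_nil_of_length_pos (by omega)
    have hexp := hthr.length_div_le_of_hasPeriod hv hne hper
    have : (((x ++ y ++ x).length : ℚ) + ε) / (x ++ y).length ≤ v.length / (x ++ y).length := by
      gcongr
      rw [hlen]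
      push_cast
      linarith
    linarith
  exact ⟨fun a ha => no_extension _ ha (by simp),
    fun b hb => no_extension _ hb (by simp; omega)⟩

theorem stmt11 (n : ℕ) (hn : 5 ≤ n) (ε : ℚ) (hε : ε ≤ 1)
    (w : List (Fin n)) (hthr : lexpLE w ((n : ℚ) / (n - 1)))
    (x y : List (Fin n)) (hx : x ≠ []) (hfac : x ++ y ++ x <:+: w)
    (hbad : (n : ℚ) / (n - 1) < (((x ++ y ++ x).length : ℚ) + ε) / ((x ++ y).length : ℚ)) :
    (∀ a : Fin n, a :: (x ++ y ++ x) <:+: w →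
      ¬ _root_.HasPeriod (a :: (x ++ y ++ x)) (x ++ y).length) ∧
    (∀ b : Fin n, (x ++ y ++ x) ++ [b] <:+: w →
      ¬ _root_.HasPeriod ((x ++ y ++ x) ++ [b]) (x ++ y).length) :=
  stmt11_general n ε hε w hthr x y hbad
end
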